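/- arXiv:2601.13432 — 3 statements merged into one kernel-verified Lean document; each statement's English description precedes it below -/
import Mathlib

section
/- Let G be a simple graph and u, v distinct vertices with N_G(u) ⊆ N_G(v). Then the independence complex I(G - v) is a deformation retract of I(G); in particular I(G) is homotopy equivalent to I(G - v). -/
noncomputable section

/-- The geometric realization of the independence complex of a graph: the space of
finitely supported probability distributions on `V` whose support is an independent set. -/
def indepReal {V : Type} (G : SimpleGraph V) : Type :=
  {f : V → ℝ // (∀ x, 0 ≤ f x) ∧ (∑ᶠ x, f x) = 1 ∧
    ∀ u v, f u ≠ 0 → f v ≠ 0 → ¬ G.Adj u v}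

instance {V : Type} (G : SimpleGraph V) : TopologicalSpace (indepReal G) := by
  unfold indepReal; infer_instance

/-- The subspace of `|I(G)|` of points supported away from `v`; it is the geometric
realization of `I(G - v)`. -/
def delVertReal {V : Type} (G : SimpleGraph V) (v : V) : Type :=
  {f : indepReal G // f.1 v = 0}

instance {V : Type} (G : SimpleGraph V) (v : V) : TopologicalSpace (delVertReal G v) := by
  unfold delVertReal; infer_instance

/-- The inclusion `|I(G - v)| ↪ |I(G)|`. -/
def delVertIncl {V : Type} (G : SimpleGraph V) (v : V) : C(delVertReal G v, indepReal G) :=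
  ⟨Subtype.val, continuous_subtype_val⟩

namespace FoldAux

open scoped Classical

variable {V : Type}

/-- The fold map at time `t`: move a `t`-fraction of the mass at `v` to `u`. -/
def foldFun (u v : V) (t : ℝ) (f : V → ℝ) : V → ℝ :=
  fun x => f x + t * f v * ((if x = u then (1 : ℝ) else 0) - (if x = v then (1 : ℝ) else 0))

variable {u v : V}

theorem foldFun_u (huv : u ≠ v) (t : ℝ) (f : V → ℝ) :
    foldFun u v t f u = f u + t * f v := by
  show f u + t * f v * ((if u = u then (1:ℝ) else 0) - (if u = v then (1:ℝ) else 0)) = _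
  rw [if_pos rfl, if_neg huv]; ring

theorem foldFun_v (huv : u ≠ v) (t : ℝ) (f : V → ℝ) :
    foldFun u v t f v = f v - t * f v := by
  show f v + t * f v * ((if v = u then (1:ℝ) else 0) - (if v = v then (1:ℝ) else 0)) = _
  rw [if_pos rfl, if_neg huv.symm]; ring

theorem foldFun_other (t : ℝ) (f : V → ℝ) {x : V} (hxu : x ≠ u) (hxv : x ≠ v) :
    foldFun u v t f x = f x := by
  show f x + t * f v * ((if x = u then (1:ℝ) else 0) - (if x = v then (1:ℝ) else 0)) = _
  rw [if_neg hxu, if_neg hxv]; ring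

theorem foldFun_zero (f : V → ℝ) : foldFun u v 0 f = f := by
  funext x; simp [foldFun]

theorem foldFun_of_zero (t : ℝ) {f : V → ℝ} (hv : f v = 0) : foldFun u v t f = f := by
  funext x; simp [foldFun, hv]

theorem foldFun_nonneg (huv : u ≠ v) {t : ℝ} (ht0 : 0 ≤ t) (ht1 : t ≤ 1) {f : V → ℝ}
    (hf : ∀ x, 0 ≤ f x) (x : V) : 0 ≤ foldFun u v t f x := by
  by_cases hxu : x = u
  · rw [hxu, foldFun_u huv]
    have := mul_nonneg ht0 (hf v)
    linarith [hf u]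
  by_cases hxv : x = v
  · rw [hxv, foldFun_v huv]
    have : t * f v ≤ 1 * f v := mul_le_mul_of_nonneg_right ht1 (hf v)
    linarith [hf v]
  · rw [foldFun_other t f hxu hxv]; exact hf x

theorem foldFun_sum (huv : u ≠ v) (t : ℝ) {f : V → ℝ}
    (hf : (Function.support f).Finite) :
    (∑ᶠ x, foldFun u v t f x) = ∑ᶠ x, f x := by
  have h1 : (Function.support fun x => if x = u then t * f v else (0 : ℝ)).Finite := by
    apply (Set.finite_singleton u).subset
    intro x hx
    by_contra hxu
    simp only [Set.mem_singleton_iff] at hxu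
    simp [Function.mem_support, hxu] at hx
  have h2 : (Function.support fun x => if x = v then -(t * f v) else (0 : ℝ)).Finite := by
    apply (Set.finite_singleton v).subset
    intro x hx
    by_contra hxv
    simp only [Set.mem_singleton_iff] at hxv
    simp [Function.mem_support, hxv] at hx
  have heq : foldFun u v t f = fun x =>
      f x + ((if x = u then t * f v else 0) + (if x = v then -(t * f v) else 0)) := by
    funext x
    show f x + t * f v * ((if x = u then (1:ℝ) else 0) - (if x = v then (1:ℝ) else 0)) = _
    split_ifs <;> ring
  have h3 : (Function.support fun x =>
      (if x = u then t * f v else 0) + if x = v then -(t * f v) else (0:ℝ)).Finite := by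
    refine Set.Finite.subset (h1.union h2) ?_
    intro x hx
    by_contra hmem
    simp only [Set.mem_union, Function.mem_support, not_or, not_not] at hmem
    simp [Function.mem_support, hmem.1, hmem.2] at hx
  rw [heq]
  rw [finsum_add_distrib hf h3]
  rw [finsum_add_distrib h1 h2]
  rw [finsum_eq_single (fun x => if x = u then t * f v else (0:ℝ)) u
      (fun x hx => if_neg hx),
    finsum_eq_single (fun x => if x = v then -(t * f v) else (0:ℝ)) v
      (fun x hx => if_neg hx)]
  simp

theorem foldFun_support {t : ℝ} {f : V → ℝ} {w : V} (huv : u ≠ v)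
    (hw : foldFun u v t f w ≠ 0) : f w ≠ 0 ∨ (w = u ∧ f v ≠ 0) := by
  by_cases hwu : w = u
  · subst hwu
    rw [foldFun_u huv] at hw
    by_cases hu : f w = 0
    · right
      refine ⟨rfl, fun hv => ?_⟩
      rw [hu, hv] at hw; simp at hw
    · exact Or.inl hu
  by_cases hwv : w = v
  · subst hwv
    rw [foldFun_v huv] at hw
    left; intro hv; rw [hv] at hw; simp at hw
  · rw [foldFun_other t f hwu hwv] at hw; exact Or.inl hw

end FoldAux

open FoldAux in
/-- If `u ≠ v` and `N_G(u) ⊆ N_G(v)`, then `|I(G - v)|` is a deformation retract of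
`|I(G)|`; in particular the two spaces are homotopy equivalent. -/
theorem stmt6 {V : Type} (G : SimpleGraph V) (u v : V) (huv : u ≠ v)
    (h : G.neighborSet u ⊆ G.neighborSet v) :
    (∃ r : C(indepReal G, delVertReal G v),
      (∀ a : delVertReal G v, r a.1 = a) ∧
      ((delVertIncl G v).comp r).Homotopic (ContinuousMap.id _)) ∧
    Nonempty (ContinuousMap.HomotopyEquiv (indepReal G) (delVertReal G v)) := by
  classical
  -- membership of the folded distributions
  have key : ∀ (t : ℝ), 0 ≤ t → t ≤ 1 → ∀ f : indepReal G,
      (∀ x, 0 ≤ foldFun u v t f.1 x) ∧ (∑ᶠ x, foldFun u v t f.1 x) = 1 ∧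
        ∀ a b, foldFun u v t f.1 a ≠ 0 → foldFun u v t f.1 b ≠ 0 → ¬ G.Adj a b := by
    intro t ht0 ht1 f
    obtain ⟨hpos, hsum, hind⟩ := f.2
    have hfin : (Function.support f.1).Finite := by
      by_contra hfin
      have := finsum_of_infinite_support (f := f.1) hfin
      rw [hsum] at this
      exact one_ne_zero this
    refine ⟨foldFun_nonneg huv ht0 ht1 hpos, by rw [foldFun_sum huv t hfin, hsum], ?_⟩
    -- independence
    have hu : ∀ a, f.1 a ≠ 0 → f.1 v ≠ 0 → ¬ G.Adj u a := by
      intro a ha hv hadj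
      exact hind v a hv ha (h hadj)
    intro a b ha hb hadj
    rcases foldFun_support huv ha with ha' | ⟨hau, hv⟩
    · rcases foldFun_support huv hb with hb' | ⟨hbu, hv⟩
      · exact hind a b ha' hb' hadj
      · exact hu a ha' hv (hbu ▸ hadj).symm
    · rcases foldFun_support huv hb with hb' | ⟨hbu, hv'⟩
      · exact hu b hb' hv (hau ▸ hadj)
      · subst hau; subst hbu; exact G.irrefl hadj
  -- the retraction
  have contfold : ∀ (t : ℝ), Continuous fun f : indepReal G => foldFun u v t f.1 := by
    intro t
    apply continuous_pi
    intro x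
    exact ((continuous_apply x).comp continuous_subtype_val).add
      ((continuous_const.mul ((continuous_apply v).comp continuous_subtype_val)).mul
        continuous_const)
  have hval : ∀ f : indepReal G, foldFun u v 1 f.1 v = 0 := fun f => by
    rw [foldFun_v huv]; ring
  let r : C(indepReal G, delVertReal G v) :=
    ⟨fun f => ⟨⟨foldFun u v 1 f.1, key 1 zero_le_one le_rfl f⟩, hval f⟩,
      Continuous.subtype_mk
        (Continuous.subtype_mk (contfold 1) (fun f => key 1 zero_le_one le_rfl f))
        (fun f => hval f)⟩
  have hr : ∀ a : delVertReal G v, r a.1 = a := by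
    intro a
    apply Subtype.ext
    apply Subtype.ext
    exact foldFun_of_zero 1 a.2
  -- the homotopy incl ∘ r ≃ id
  have conthom : Continuous fun p : (unitInterval × indepReal G) =>
      foldFun u v (1 - (p.1 : ℝ)) p.2.1 := by
    apply continuous_pi
    intro x
    have h1 : Continuous fun p : (unitInterval × indepReal G) => (1 - (p.1 : ℝ)) :=
      continuous_const.sub (continuous_subtype_val.comp continuous_fst)
    have h2 : Continuous fun p : (unitInterval × indepReal G) => p.2.1 v :=
      (continuous_apply v).comp (continuous_subtype_val.comp continuous_snd)
    have h3 : Continuous fun p : (unitInterval × indepReal G) => p.2.1 x :=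
      (continuous_apply x).comp (continuous_subtype_val.comp continuous_snd)
    exact h3.add ((h1.mul h2).mul continuous_const)
  let H : ContinuousMap.Homotopy ((delVertIncl G v).comp r) (ContinuousMap.id _) :=
    { toFun := fun p => ⟨foldFun u v (1 - (p.1 : ℝ)) p.2.1,
        key (1 - (p.1 : ℝ)) (by linarith [p.1.2.2]) (by linarith [p.1.2.1]) p.2⟩
      continuous_toFun := conthom.subtype_mk _
      map_zero_left := fun f => by
        apply Subtype.ext
        show foldFun u v (1 - (0 : ℝ)) f.1 = foldFun u v 1 f.1
        norm_num
      map_one_left := fun f => by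
        apply Subtype.ext
        show foldFun u v (1 - (1 : ℝ)) f.1 = f.1
        norm_num [foldFun_zero] }
  have hhom : ((delVertIncl G v).comp r).Homotopic (ContinuousMap.id _) := ⟨H⟩
  refine ⟨⟨r, hr, hhom⟩, ⟨⟨r, delVertIncl G v, hhom, ?_⟩⟩⟩
  have : r.comp (delVertIncl G v) = ContinuousMap.id _ := by
    ext a
    exact hr a
  rw [this]
end
end

section
/- For every n ≥ 2, the independence complex of the categorical product Kₙ × K₂ is homotopy equivalent to a wedge of n - 1 circles S¹. -/
noncomputable section

open scoped unitInterval

/-- The `n`-dimensional sphere. -/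
def Sph (n : ℕ) : Type := (Metric.sphere (0 : EuclideanSpace ℝ (Fin (n+1))) 1 : Set _)

instance (n : ℕ) : TopologicalSpace (Sph n) := by unfold Sph; infer_instance

/-- Basepoint of the sphere. -/
def SphPt (n : ℕ) : Sph n := ⟨EuclideanSpace.single 0 1, by simp⟩

section JoinDefs
variable (X Y : Type) [TopologicalSpace X] [TopologicalSpace Y]

/-- Points of the auxiliary carrier identified with the point `x` of `X` in the join. -/
def joinAtX (a : (X × Y × I) ⊕ (X ⊕ Y)) (x : X) : Prop :=
  match a with
  | .inl p => p.2.2 = 0 ∧ p.1 = x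
  | .inr (.inl x') => x' = x
  | .inr (.inr _) => False

/-- Points of the auxiliary carrier identified with the point `y` of `Y` in the join. -/
def joinAtY (a : (X × Y × I) ⊕ (X ⊕ Y)) (y : Y) : Prop :=
  match a with
  | .inl p => p.2.2 = 1 ∧ p.2.1 = y
  | .inr (.inl _) => False
  | .inr (.inr y') => y' = y

/-- The topological join `X * Y` (with the correct value `X * ∅ = X`, `∅ * Y = Y`). -/
def Join : Type :=
  Quot (fun a b : (X × Y × I) ⊕ (X ⊕ Y) =>
    (∃ x, joinAtX X Y a x ∧ joinAtX X Y b x) ∨ (∃ y, joinAtY X Y a y ∧ joinAtY X Y b y))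

instance instTopJoin : TopologicalSpace (Join X Y) := by unfold Join; infer_instance

/-- The (unreduced) suspension of `X`, as the join of `X` with a two-point discrete space. -/
def Susp : Type := Join X Bool

instance instTopSusp : TopologicalSpace (Susp X) := by unfold Susp; infer_instance

/-- A canonical basepoint of the suspension (the north pole). -/
def SuspPt : Susp X := Quot.mk _ (.inr (.inr true))

/-- The wedge sum of two pointed spaces. -/
def Wedge (x₀ : X) (y₀ : Y) : Type :=
  Quot (fun a b : X ⊕ Y =>
    (a = .inl x₀ ∨ a = .inr y₀) ∧ (b = .inl x₀ ∨ b = .inr y₀))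

instance instTopWedge (x₀ : X) (y₀ : Y) : TopologicalSpace (Wedge X Y x₀ y₀) := by
  unfold Wedge; infer_instance

end JoinDefs

/-- A wedge of spheres of dimensions `d i`, `i : ι` (a point when `ι` is empty). -/
def WedgeSpheres (ι : Type) (d : ι → ℕ) : Type :=
  Quot (fun a b : Unit ⊕ (Σ i, Sph (d i)) =>
    (a = .inl () ∨ ∃ i, a = .inr ⟨i, SphPt (d i)⟩) ∧
    (b = .inl () ∨ ∃ i, b = .inr ⟨i, SphPt (d i)⟩))

instance (ι : Type) (d : ι → ℕ) : TopologicalSpace (WedgeSpheres ι d) := by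
  unfold WedgeSpheres; infer_instance

/-- The categorical (tensor) product of two simple graphs. -/
def tensorG {V W : Type} (G : SimpleGraph V) (H : SimpleGraph W) : SimpleGraph (V × W) where
  Adj a b := G.Adj a.1 b.1 ∧ H.Adj a.2 b.2
  symm := ⟨fun _ _ h => ⟨h.1.symm, h.2.symm⟩⟩
  loopless := ⟨fun a h => G.loopless.irrefl a.1 h.1⟩

/-- The complete graph on two vertices. -/
def K2 : SimpleGraph (Fin 2) := SimpleGraph.completeGraph (Fin 2)

/-- The generalized Mycielskian `μ_l(G)`.  The vertex `none` is the apex `w`; the layer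
`V × {i}` of the paper corresponds to the vertices `some (v, i-1)`, the top layer
(the copy of `G`) being `some (v, l)`. -/
def myc {V : Type} (l : ℕ) (G : SimpleGraph V) : SimpleGraph (Option (V × Fin (l+1))) where
  Adj a b :=
    match a, b with
    | some p, some q => G.Adj p.1 q.1 ∧
        ((p.2.val + 1 = q.2.val ∨ q.2.val + 1 = p.2.val) ∨ (p.2.val = q.2.val ∧ p.2.val = l))
    | some p, none => p.2.val = 0
    | none, some q => q.2.val = 0
    | none, none => False
  symm := by
    constructor
    rintro (_|p) (_|q) h <;> simp_all
    exact ⟨h.1.symm, by omega⟩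
  loopless := by
    constructor
    rintro (_|p) h
    · exact h
    · exact SimpleGraph.irrefl _ h.1

/-!
The realization `X` of `I(Kₙ × K₂)` is the bottom simplex (`height = 0`), the top simplex
(`height = 1`) and `n` edges between them, one through the two copies of each vertex. Collapsing
both simplices and the last edge gives `toWedge : X → ⋁ₙ₋₁ S¹`, which winds each remaining edge
once around its own circle. Backwards, `ofWedge` sends the `i`-th circle to the loop running from the
barycentre of the bottom simplex up along edge `i` to the barycentre of the top simplex and back
down along the last edge. Then `toWedge ∘ ofWedge` wraps the upper half of each circle once around
it and collapses the lower half; interpolating angles deforms this to the identity. On the other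
side, unwinding the loops (`unwind`) deforms `ofWedge ∘ toWedge` into the map `stretch` that
contracts both simplices to their barycentres and stretches each edge over its string, and
`stretch` is homotopic to the identity.
-/

namespace IndepKnK2

open Real SimpleGraph

abbrev X (n : ℕ) := indepReal (tensorG (completeGraph (Fin n)) K2)

variable {n : ℕ}

lemma adj_iff {a b : Fin n × Fin 2} :
    (tensorG (completeGraph (Fin n)) K2).Adj a b ↔ a.1 ≠ b.1 ∧ a.2 ≠ b.2 := by
  simp [tensorG, K2]

/-- `a` and `b` are the weights of the bottom copies `(k, 0)` and of the top copies `(k, 1)`. -/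
def mk (a b : Fin n → ℝ) (ha : ∀ k, 0 ≤ a k) (hb : ∀ k, 0 ≤ b k)
    (hsum : ∑ k, a k + ∑ k, b k = 1) (hind : ∀ i j, i ≠ j → a i = 0 ∨ b j = 0) : X n := by
  refine ⟨fun v => ![a, b] v.2 v.1, fun ⟨k, e⟩ => ?_, ?_, ?_⟩
  · fin_cases e
    exacts [ha k, hb k]
  · rw [finsum_eq_sum_of_fintype, Fintype.sum_prod_type_right, Fin.sum_univ_two]
    exact hsum
  · rintro ⟨i, e⟩ ⟨j, e'⟩ hu hv hadj
    rw [adj_iff] at hadj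
    fin_cases e <;> fin_cases e' <;> simp_all
    · exact (hind i j hadj).elim hu hv
    · exact (hind j i (Ne.symm hadj)).elim hv hu

@[simp] lemma mk_bot {a b ha hb hsum hind} (k : Fin n) :
    (mk a b ha hb hsum hind).1 (k, 0) = a k := rfl

@[simp] lemma mk_top {a b ha hb hsum hind} (k : Fin n) :
    (mk a b ha hb hsum hind).1 (k, 1) = b k := rfl

@[ext] lemma ext {x y : X n} (h0 : ∀ k, x.1 (k, 0) = y.1 (k, 0))
    (h1 : ∀ k, x.1 (k, 1) = y.1 (k, 1)) : x = y := by
  refine Subtype.ext (funext fun ⟨k, e⟩ => ?_)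
  fin_cases e
  exacts [h0 k, h1 k]

lemma nonneg (x : X n) (v : Fin n × Fin 2) : 0 ≤ x.1 v := x.2.1 v

lemma bot_eq_zero_or_top_eq_zero (x : X n) {i j : Fin n} (hij : i ≠ j) :
    x.1 (i, 0) = 0 ∨ x.1 (j, 1) = 0 := by
  by_contra! h
  exact x.2.2.2 (i, 0) (j, 1) h.1 h.2 (adj_iff.2 ⟨hij, by simp⟩)

lemma continuous_coord (v : Fin n × Fin 2) : Continuous fun x : X n => x.1 v :=
  (continuous_apply v).comp continuous_subtype_val

lemma continuousOn_of_coord {α : Type*} [TopologicalSpace α] {F : α → X n} {s : Set α}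
    (h : ∀ v, ContinuousOn (fun p => (F p).1 v) s) : ContinuousOn F s :=
  Topology.IsInducing.subtypeVal.continuousOn_iff.2 (continuousOn_pi.2 h)

/-- The bottom simplex is `height = 0`, the top one `height = 1`, and the open edges lie in
between. -/
def height (x : X n) : ℝ := ∑ k, x.1 (k, 1)

lemma sum_bot_add_height (x : X n) : ∑ k, x.1 (k, 0) + height x = 1 := by
  have := x.2.2.1
  rwa [finsum_eq_sum_of_fintype, Fintype.sum_prod_type_right, Fin.sum_univ_two] at this

lemma height_nonneg (x : X n) : 0 ≤ height x :=
  Finset.sum_nonneg fun k _ => nonneg x (k, 1)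

lemma height_le_one (x : X n) : height x ≤ 1 := by
  have := sum_bot_add_height x
  have : 0 ≤ ∑ k, x.1 (k, 0) := Finset.sum_nonneg fun k _ => nonneg x (k, 0)
  linarith

lemma continuous_height : Continuous (height (n := n)) :=
  continuous_finsetSum _ fun k _ => continuous_coord (k, 1)

lemma top_eq_zero_of_height_eq_zero {x : X n} (h : height x = 0) (k : Fin n) :
    x.1 (k, 1) = 0 :=
  (Finset.sum_eq_zero_iff_of_nonneg fun i _ => nonneg x (i, 1)).1 h k (Finset.mem_univ k)

lemma bot_eq_zero_of_height_eq_one {x : X n} (h : height x = 1) (k : Fin n) :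
    x.1 (k, 0) = 0 := by
  have hbot : ∑ k, x.1 (k, 0) = 0 := by linarith [sum_bot_add_height x]
  exact (Finset.sum_eq_zero_iff_of_nonneg fun i _ => nonneg x (i, 0)).1 hbot k (Finset.mem_univ k)

/-- The closed edge joining the two copies of the vertex `j`. -/
def edge (j : Fin n) : Set (X n) := {x | ∀ k ≠ j, x.1 (k, 0) = 0 ∧ x.1 (k, 1) = 0}

lemma isClosed_edge (j : Fin n) : IsClosed (edge j) := by
  simp only [edge, Set.ofPred_forall]
  exact isClosed_iInter fun k => isClosed_iInter fun _ =>
    (isClosed_eq (continuous_coord _) continuous_const).inter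
      (isClosed_eq (continuous_coord _) continuous_const)

lemma top_of_mem_edge {j : Fin n} {x : X n} (hx : x ∈ edge j) : x.1 (j, 1) = height x :=
  (Finset.sum_eq_single j (fun k _ hk => (hx k hk).2) (by simp)).symm

lemma bot_of_mem_edge {j : Fin n} {x : X n} (hx : x ∈ edge j) :
    x.1 (j, 0) = 1 - height x := by
  have := sum_bot_add_height x
  rw [Finset.sum_eq_single j (fun k _ hk => (hx k hk).1) (by simp)] at this
  linarith

lemma eq_of_mem_edge {j j' : Fin n} {x : X n} (hj : x ∈ edge j) (hj' : x ∈ edge j') :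
    j = j' := by
  by_contra hne
  have hbot : x.1 (j, 0) = 0 := (hj' j hne).1
  have htop : x.1 (j, 1) = 0 := (hj' j hne).2
  have := sum_bot_add_height x
  rw [bot_of_mem_edge hj] at hbot
  rw [top_of_mem_edge hj] at htop
  linarith

/-- Every other vertex is adjacent to one of the two copies of `j`. -/
lemma mem_edge_of_ne_zero {j : Fin n} {x : X n} (h0 : x.1 (j, 0) ≠ 0) (h1 : x.1 (j, 1) ≠ 0) :
    x ∈ edge j := fun _ hk =>
  ⟨(bot_eq_zero_or_top_eq_zero x hk).resolve_right h1,
    (bot_eq_zero_or_top_eq_zero x (Ne.symm hk)).resolve_left h0⟩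

lemma exists_mem_edge {x : X n} (h0 : height x ≠ 0) (h1 : height x ≠ 1) :
    ∃ j, x ∈ edge j := by
  obtain ⟨j, -, hj⟩ := Finset.exists_ne_zero_of_sum_ne_zero h0
  obtain ⟨i, -, hi⟩ : ∃ i ∈ Finset.univ, x.1 (i, 0) ≠ 0 :=
    Finset.exists_ne_zero_of_sum_ne_zero fun h => h1 (by linarith [sum_bot_add_height x])
  obtain rfl : i = j := by
    by_contra hij
    exact (bot_eq_zero_or_top_eq_zero x hij).elim hi hj
  exact ⟨i, mem_edge_of_ne_zero hi hj⟩

section Glue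

variable {Y Z : Type*} (FA FB : Y → X n → Z) (FE : Fin n → Y → ℝ → Z)

/-- A family of maps on `X n` given by `FA` on the bottom simplex, `FB` on the top simplex and,
on the interior of the edge `j`, by `FE j` as a function of the height. -/
def glue [NeZero n] (y : Y) (x : X n) : Z :=
  open Classical in
  if height x = 0 then FA y x
  else if height x = 1 then FB y x
  else FE (Classical.epsilon fun j => x ∈ edge j) y (height x)

variable [NeZero n] {FA FB FE} {y : Y} {x : X n}

lemma glue_of_height_eq_zero (h : height x = 0) : glue FA FB FE y x = FA y x := by
  simp [glue, h]

lemma glue_of_height_eq_one (h : height x = 1) : glue FA FB FE y x = FB y x := by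
  simp [glue, h]

lemma glue_of_mem_edge_of_ne {j : Fin n} (hx : x ∈ edge j) (h0 : height x ≠ 0)
    (h1 : height x ≠ 1) : glue FA FB FE y x = FE j y (height x) := by
  have hj := eq_of_mem_edge (Classical.epsilon_spec (p := fun j => x ∈ edge j) ⟨j, hx⟩) hx
  simp only [glue, if_neg h0, if_neg h1, hj]

lemma glue_of_mem_edge {j : Fin n}
    (hA : ∀ y x, x ∈ edge j → height x = 0 → FE j y 0 = FA y x)
    (hB : ∀ y x, x ∈ edge j → height x = 1 → FE j y 1 = FB y x) (hx : x ∈ edge j) :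
    glue FA FB FE y x = FE j y (height x) := by
  by_cases h0 : height x = 0
  · rw [glue_of_height_eq_zero h0, h0, hA y x hx h0]
  by_cases h1 : height x = 1
  · rw [glue_of_height_eq_one h1, h1, hB y x hx h1]
  exact glue_of_mem_edge_of_ne hx h0 h1

lemma glue_congr {Y' : Type*} {FA' FB' : Y' → X n → Z} {FE' : Fin n → Y' → ℝ → Z} {y' : Y'}
    (hA : height x = 0 → FA y x = FA' y' x) (hB : height x = 1 → FB y x = FB' y' x)
    (hE : ∀ j, x ∈ edge j → 0 < height x → height x < 1 →
      FE j y (height x) = FE' j y' (height x)) :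
    glue FA FB FE y x = glue FA' FB' FE' y' x := by
  by_cases h0 : height x = 0
  · rw [glue_of_height_eq_zero h0, glue_of_height_eq_zero h0, hA h0]
  by_cases h1 : height x = 1
  · rw [glue_of_height_eq_one h1, glue_of_height_eq_one h1, hB h1]
  obtain ⟨j, hj⟩ := exists_mem_edge h0 h1
  rw [glue_of_mem_edge_of_ne hj h0 h1, glue_of_mem_edge_of_ne hj h0 h1,
    hE j hj (lt_of_le_of_ne (height_nonneg x) (Ne.symm h0))
      (lt_of_le_of_ne (height_le_one x) h1)]

lemma apply_glue {Z' : Type*} (φ : Z → Z') :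
    φ (glue FA FB FE y x) =
      glue (fun y x => φ (FA y x)) (fun y x => φ (FB y x)) (fun j y s => φ (FE j y s)) y x := by
  unfold glue
  split_ifs <;> rfl

lemma continuous_glue [TopologicalSpace Y] [TopologicalSpace Z]
    (hA : ContinuousOn (fun p : Y × X n => FA p.1 p.2) {p | height p.2 = 0})
    (hB : ContinuousOn (fun p : Y × X n => FB p.1 p.2) {p | height p.2 = 1})
    (hE : ∀ j, Continuous fun p : Y × ℝ => FE j p.1 p.2)
    (hAE : ∀ j y x, x ∈ edge j → height x = 0 → FE j y 0 = FA y x)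
    (hBE : ∀ j y x, x ∈ edge j → height x = 1 → FE j y 1 = FB y x) :
    Continuous fun p : Y × X n => glue FA FB FE p.1 p.2 := by
  let piece : Option (Option (Fin n)) → Set (Y × X n)
    | none => {p | height p.2 = 0}
    | some none => {p | height p.2 = 1}
    | some (some j) => {p | p.2 ∈ edge j}
  refine (locallyFinite_of_finite piece).continuous ?_ (fun i => ?_) (fun i => ?_)
  · refine Set.eq_univ_of_forall fun p => Set.mem_iUnion.2 ?_
    by_cases h0 : height p.2 = 0
    · exact ⟨none, h0⟩
    by_cases h1 : height p.2 = 1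
    · exact ⟨some none, h1⟩
    obtain ⟨j, hj⟩ := exists_mem_edge h0 h1
    exact ⟨some (some j), hj⟩
  · have hh : Continuous fun p : Y × X n => height p.2 := continuous_height.comp continuous_snd
    rcases i with _ | _ | j
    · exact isClosed_eq hh continuous_const
    · exact isClosed_eq hh continuous_const
    · exact (isClosed_edge j).preimage continuous_snd
  · rcases i with _ | _ | j
    · exact hA.congr fun p hp => glue_of_height_eq_zero hp
    · exact hB.congr fun p hp => glue_of_height_eq_one hp
    · refine ((hE j).comp (continuous_fst.prodMk (continuous_height.comp continuous_snd))
        ).continuousOn.congr fun p hp => glue_of_mem_edge (hAE j) (hBE j) hp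

end Glue

def clamp01 (t : ℝ) : ℝ := Set.projIcc 0 1 zero_le_one t

lemma clamp01_of_nonpos {t : ℝ} (h : t ≤ 0) : clamp01 t = 0 := by
  simp [clamp01, Set.projIcc_of_le_left _ h]

lemma clamp01_of_one_le {t : ℝ} (h : 1 ≤ t) : clamp01 t = 1 := by
  simp [clamp01, Set.projIcc_of_right_le _ h]

lemma clamp01_of_mem {t : ℝ} (h0 : 0 ≤ t) (h1 : t ≤ 1) : clamp01 t = t := by
  simp [clamp01, Set.projIcc_of_mem _ ⟨h0, h1⟩]

lemma clamp01_nonneg (t : ℝ) : 0 ≤ clamp01 t := (Set.projIcc 0 1 zero_le_one t).2.1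

lemma clamp01_le_one (t : ℝ) : clamp01 t ≤ 1 := (Set.projIcc 0 1 zero_le_one t).2.2

@[fun_prop]
lemma continuous_clamp01 : Continuous clamp01 :=
  continuous_subtype_val.comp continuous_projIcc

lemma continuous_segment_coord (v : Fin n × Fin 2) :
    Continuous fun p : I × X n => (1 - (p.1 : ℝ)) * p.2.1 v + p.1 / n :=
  ((continuous_const.sub (continuous_subtype_val.comp continuous_fst)).mul
    ((continuous_coord v).comp continuous_snd)).add
    ((continuous_subtype_val.comp continuous_fst).div_const _)

variable [NeZero n]

lemma natCast_mul_div_natCast (a : ℝ) : (n : ℝ) * (a / n) = a :=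
  mul_div_cancel₀ a (Nat.cast_ne_zero.2 (NeZero.ne n))

lemma sum_const_div_add_ite (j : Fin n) (a b : ℝ) :
    ∑ k : Fin n, (a / n + b * if k = j then 1 else 0) = a + b := by
  simp [Finset.sum_add_distrib, natCast_mul_div_natCast]

def baryBot : X n :=
  mk (fun _ => 1 / n) 0 (fun _ => by positivity) (fun _ => le_rfl)
    (by simp) fun _ _ _ => Or.inr rfl

def baryTop : X n :=
  mk 0 (fun _ => 1 / n) (fun _ => le_rfl) (fun _ => by positivity)
    (by simp) fun _ _ _ => Or.inl rfl

/-- The string through the edge `j`: it runs linearly from `baryBot` to the bottom copy of `j`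
for `τ ∈ [0, 1/3]`, along the edge for `τ ∈ [1/3, 2/3]` (at height `3τ - 1`), and from the top
copy of `j` to `baryTop` for `τ ∈ [2/3, 1]`. -/
def string (j : Fin n) (τ : ℝ) : X n :=
  mk (fun k => (1 - clamp01 (3 * τ - 1)) *
      ((1 - clamp01 (3 * τ)) / n + clamp01 (3 * τ) * if k = j then 1 else 0))
    (fun k => clamp01 (3 * τ - 1) *
      ((1 - clamp01 (3 * τ - 2)) * (if k = j then 1 else 0) + clamp01 (3 * τ - 2) / n))
    (fun k => by
      have := clamp01_le_one (3 * τ - 1); have := clamp01_le_one (3 * τ)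
      have := clamp01_nonneg (3 * τ)
      positivity)
    (fun k => by
      have := clamp01_le_one (3 * τ - 2); have := clamp01_nonneg (3 * τ - 2)
      have := clamp01_nonneg (3 * τ - 1)
      positivity)
    (by
      rw [← Finset.mul_sum, ← Finset.mul_sum, sum_const_div_add_ite]
      simp_rw [add_comm ((1 - clamp01 (3 * τ - 2)) * _)]
      rw [sum_const_div_add_ite]
      ring)
    (fun i i' hii' => by
      -- below the middle third the top layer vanishes, above it the bottom one, and in between
      -- both are supported at `j`
      by_cases hτ : 3 * τ - 1 ≤ 0
      · exact Or.inr (by simp [clamp01_of_nonpos hτ])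
      by_cases hτ' : 1 ≤ 3 * τ - 1
      · exact Or.inl (by simp [clamp01_of_one_le hτ'])
      rw [clamp01_of_one_le (by linarith : (1 : ℝ) ≤ 3 * τ),
        clamp01_of_nonpos (by linarith : 3 * τ - 2 ≤ 0)]
      by_cases hi : i = j
      · subst hi
        exact Or.inr (by simp [Ne.symm hii'])
      · exact Or.inl (by simp [hi]))

lemma string_zero (j : Fin n) : string j 0 = baryBot := by
  ext k <;> simp [string, baryBot, clamp01_of_nonpos]

lemma string_one (j : Fin n) : string j 1 = baryTop := by
  ext k <;> norm_num [string, baryTop, clamp01_of_one_le]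

lemma height_string (j : Fin n) (τ : ℝ) : height (string j τ) = clamp01 (3 * τ - 1) := by
  simp_rw [height, string, mk_top, ← Finset.mul_sum, add_comm ((1 - clamp01 (3 * τ - 2)) * _),
    sum_const_div_add_ite]
  ring

lemma string_mem_edge (j : Fin n) {τ : ℝ} (h1 : 1 / 3 ≤ τ) (h2 : τ ≤ 2 / 3) :
    string j τ ∈ edge j := fun k hk => by
  simp [string, hk, clamp01_of_one_le (by linarith : (1 : ℝ) ≤ 3 * τ),
    clamp01_of_nonpos (by linarith : 3 * τ - 2 ≤ 0)]

lemma string_of_mem_edge {j : Fin n} {x : X n} (hx : x ∈ edge j) :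
    string j ((height x + 1) / 3) = x := by
  have hs0 := height_nonneg x
  have hs1 := height_le_one x
  have e1 : clamp01 (3 * ((height x + 1) / 3)) = 1 := clamp01_of_one_le (by linarith)
  have e2 : clamp01 (3 * ((height x + 1) / 3) - 1) = height x :=
    (congrArg clamp01 (by ring)).trans (clamp01_of_mem hs0 hs1)
  have e3 : clamp01 (3 * ((height x + 1) / 3) - 2) = 0 := clamp01_of_nonpos (by linarith)
  ext k <;> by_cases hk : k = j
  · simp [string, e1, e2, hk, bot_of_mem_edge hx]
  · simp [string, e1, e2, hk, (hx k hk).1]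
  · simp [string, e2, e3, hk, top_of_mem_edge hx]
  · simp [string, e2, e3, hk, (hx k hk).2]

lemma continuous_string (j : Fin n) : Continuous (string j) := by
  refine Continuous.subtype_mk (continuous_pi fun ⟨k, e⟩ => ?_) _
  fin_cases e <;> simp only <;> fun_prop

def segToBaryBot (x : X n) (hx : height x = 0) (u : I) : X n :=
  mk (fun k => (1 - u) * x.1 (k, 0) + u / n) 0
    (fun k => add_nonneg (mul_nonneg (by simp [u.2.2]) (nonneg x _))
      (div_nonneg u.2.1 n.cast_nonneg))
    (fun _ => le_rfl)
    (by
      have := sum_bot_add_height x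
      rw [hx, add_zero] at this
      simp [Finset.sum_add_distrib, ← Finset.mul_sum, this, natCast_mul_div_natCast])
    fun _ _ _ => Or.inr rfl

def segToBaryTop (x : X n) (hx : height x = 1) (u : I) : X n :=
  mk 0 (fun k => (1 - u) * x.1 (k, 1) + u / n)
    (fun _ => le_rfl)
    (fun k => add_nonneg (mul_nonneg (by simp [u.2.2]) (nonneg x _))
      (div_nonneg u.2.1 n.cast_nonneg))
    (by
      rw [height] at hx
      simp [Finset.sum_add_distrib, ← Finset.mul_sum, hx, natCast_mul_div_natCast])
    fun _ _ _ => Or.inl rfl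

lemma height_baryBot : height (baryBot : X n) = 0 := by
  simp [height, baryBot]

@[simp] lemma segToBaryBot_zero (x : X n) (hx : height x = 0) : segToBaryBot x hx 0 = x := by
  ext k <;> simp [segToBaryBot, top_eq_zero_of_height_eq_zero hx]

@[simp] lemma segToBaryBot_one (x : X n) (hx : height x = 0) : segToBaryBot x hx 1 = baryBot := by
  ext k <;> simp [segToBaryBot, baryBot]

@[simp] lemma segToBaryTop_zero (x : X n) (hx : height x = 1) : segToBaryTop x hx 0 = x := by
  ext k <;> simp [segToBaryTop, bot_eq_zero_of_height_eq_one hx]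

@[simp] lemma segToBaryTop_one (x : X n) (hx : height x = 1) : segToBaryTop x hx 1 = baryTop := by
  ext k <;> simp [segToBaryTop, baryTop]

def stretch : C(X n, X n) where
  toFun := glue (fun _ _ => baryBot) (fun _ _ => baryTop) (fun j (_ : Unit) s => string j s) ()
  continuous_toFun := by
    refine (continuous_glue (FA := fun _ _ => baryBot) (FB := fun _ _ => baryTop)
      (FE := fun j (_ : Unit) s => string j s) continuousOn_const
      continuousOn_const (fun j => (continuous_string j).comp continuous_snd) ?_ ?_).comp
      (Continuous.prodMk_right ())
    · exact fun j _ _ _ _ => string_zero j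
    · exact fun j _ _ _ _ => string_one j

lemma stretch_apply (x : X n) :
    stretch x =
      glue (fun _ _ => baryBot) (fun _ _ => baryTop) (fun j (_ : Unit) s => string j s) () x :=
  rfl

lemma continuousOn_segToBaryBot :
    ContinuousOn (fun p : I × X n => if h : height p.2 = 0 then segToBaryBot p.2 h p.1 else p.2)
      {p | height p.2 = 0} := by
  refine continuousOn_of_coord fun ⟨k, e⟩ => ?_
  fin_cases e
  · exact (continuous_segment_coord (k, 0)).continuousOn.congr
      fun p (hp : height p.2 = 0) => by simp [hp, segToBaryBot]
  · exact (continuousOn_const (c := (0 : ℝ))).congr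
      fun p (hp : height p.2 = 0) => by simp [hp, segToBaryBot]

lemma continuousOn_segToBaryTop :
    ContinuousOn (fun p : I × X n => if h : height p.2 = 1 then segToBaryTop p.2 h p.1 else p.2)
      {p | height p.2 = 1} := by
  refine continuousOn_of_coord fun ⟨k, e⟩ => ?_
  fin_cases e
  · exact (continuousOn_const (c := (0 : ℝ))).congr
      fun p (hp : height p.2 = 1) => by simp [hp, segToBaryTop]
  · exact (continuous_segment_coord (k, 1)).continuousOn.congr
      fun p (hp : height p.2 = 1) => by simp [hp, segToBaryTop]

lemma string_eq_segToBaryBot {j : Fin n} {x : X n} (hx : x ∈ edge j) (h0 : height x = 0) (u : I) :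
    string j ((1 - u) / 3) = segToBaryBot x h0 u := by
  have e1 : clamp01 (3 * ((1 - u) / 3) - 1) = 0 := clamp01_of_nonpos (by linarith [u.2.1])
  have e2 : clamp01 (3 * ((1 - u) / 3)) = 1 - u :=
    (congrArg clamp01 (by ring)).trans (clamp01_of_mem (by linarith [u.2.2]) (by linarith [u.2.1]))
  ext k <;> simp only [string, segToBaryBot, mk_bot, mk_top, e1, e2]
  · by_cases hk : k = j
    · simp [hk, bot_of_mem_edge hx, h0]
      ring
    · simp [hk, (hx k hk).1]
  · simp

lemma string_eq_segToBaryTop {j : Fin n} {x : X n} (hx : x ∈ edge j) (h1 : height x = 1) (u : I) :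
    string j ((2 + u) / 3) = segToBaryTop x h1 u := by
  have e1 : clamp01 (3 * ((2 + u) / 3) - 1) = 1 := clamp01_of_one_le (by linarith [u.2.1])
  have e3 : clamp01 (3 * ((2 + u) / 3) - 2) = u :=
    (congrArg clamp01 (by ring)).trans (clamp01_of_mem u.2.1 u.2.2)
  ext k <;> simp only [string, segToBaryTop, mk_bot, mk_top, e1, e3]
  · simp
  · by_cases hk : k = j
    · simp [hk, top_of_mem_edge hx, h1]
    · simp [hk, (hx k hk).2]

-- A point of height `s` on the edge `j` sits at parameter `(s + 1) / 3` of the string.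
def stretchHomotopy : (ContinuousMap.id (X n)).Homotopy stretch where
  toFun p := glue (fun u x => if h : height x = 0 then segToBaryBot x h u else x)
    (fun u x => if h : height x = 1 then segToBaryTop x h u else x)
    (fun j u s => string j ((1 - u) * ((s + 1) / 3) + u * s)) p.1 p.2
  continuous_toFun := by
    refine continuous_glue continuousOn_segToBaryBot continuousOn_segToBaryTop
      (fun j => (continuous_string j).comp (by fun_prop)) (fun j u x hx h0 => ?_)
      (fun j u x hx h1 => ?_)
    · rw [dif_pos h0, ← string_eq_segToBaryBot hx h0]
      congr 1
      ring
    · rw [dif_pos h1, ← string_eq_segToBaryTop hx h1]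
      congr 1
      ring
  map_zero_left x := by
    by_cases h0 : height x = 0
    · simp [glue_of_height_eq_zero h0, h0]
    by_cases h1 : height x = 1
    · simp [glue_of_height_eq_one h1, h1]
    obtain ⟨j, hj⟩ := exists_mem_edge h0 h1
    simp [glue_of_mem_edge_of_ne hj h0 h1, string_of_mem_edge hj]
  map_one_left x := by
    rw [stretch_apply]
    exact glue_congr (fun h => by simp [h]) (fun h => by simp [h]) (by simp)

end IndepKnK2

namespace Sph

open Real

def ofAngle (θ : ℝ) : Sph 1 :=
  ⟨WithLp.toLp 2 ![cos θ, sin θ], by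
    simp [EuclideanSpace.norm_eq, Fin.sum_univ_two, cos_sq_add_sin_sq]⟩

/-- The unsigned angle of a point of the circle, in `[0, π]`. -/
def angle (z : Sph 1) : ℝ := arccos (z.1 0)

lemma ext' {z w : Sph 1} (h0 : z.1 0 = w.1 0) (h1 : z.1 1 = w.1 1) : z = w :=
  Subtype.ext (PiLp.ext fun i => by fin_cases i; exacts [h0, h1])

lemma sq_add_sq (z : Sph 1) : z.1 0 ^ 2 + z.1 1 ^ 2 = 1 := by
  have := z.2
  simp only [Metric.mem_sphere, dist_zero_right, EuclideanSpace.norm_eq, Real.norm_eq_abs,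
    sq_abs, Real.sqrt_eq_one] at this
  rwa [Fin.sum_univ_two] at this

lemma continuous_ofAngle : Continuous ofAngle :=
  Continuous.subtype_mk ((PiLp.continuous_toLp 2 _).comp <|
    continuous_pi fun i => by fin_cases i <;> simp <;> fun_prop) _

lemma continuous_angle : Continuous angle :=
  continuous_arccos.comp ((PiLp.continuous_apply 2 _ 0).comp continuous_subtype_val)

lemma continuous_snd_coord : Continuous fun z : Sph 1 => z.1 1 :=
  (PiLp.continuous_apply 2 _ 1).comp continuous_subtype_val

lemma ofAngle_zero : ofAngle 0 = SphPt 1 :=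
  ext' (by simp [ofAngle, SphPt]) (by simp [ofAngle, SphPt])

lemma ofAngle_add_two_pi (θ : ℝ) : ofAngle (θ + 2 * π) = ofAngle θ :=
  ext' (by simp [ofAngle]) (by simp [ofAngle])

lemma ofAngle_two_pi : ofAngle (2 * π) = SphPt 1 := by
  rw [← zero_add (2 * π), ofAngle_add_two_pi, ofAngle_zero]

lemma ofAngle_neg (θ : ℝ) : ofAngle (-θ) = ofAngle (2 * π - θ) := by
  rw [sub_eq_neg_add, ofAngle_add_two_pi]

lemma snd_ofAngle (θ : ℝ) : (ofAngle θ).1 1 = sin θ := rfl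

lemma angle_ofAngle {θ : ℝ} (h0 : 0 ≤ θ) (h1 : θ ≤ π) : angle (ofAngle θ) = θ :=
  arccos_cos h0 h1

lemma angle_ofAngle_neg (θ : ℝ) : angle (ofAngle (-θ)) = angle (ofAngle θ) := by
  simp [angle, ofAngle]

lemma angle_ofAngle_of_pi_le {θ : ℝ} (h0 : π ≤ θ) (h1 : θ ≤ 2 * π) :
    angle (ofAngle θ) = 2 * π - θ := by
  have h : ofAngle θ = ofAngle (-(2 * π - θ)) := by
    rw [← ofAngle_add_two_pi (-(2 * π - θ))]
    ring_nf
  rw [h, angle_ofAngle_neg, angle_ofAngle (by linarith) (by linarith)]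

lemma ofAngle_angle {z : Sph 1} (h : 0 ≤ z.1 1) : ofAngle (angle z) = z := by
  have hz := sq_add_sq z
  refine ext' (cos_arccos (by nlinarith) (by nlinarith)) ?_
  simp only [snd_ofAngle, angle, sin_arccos]
  rw [show 1 - z.1 0 ^ 2 = z.1 1 ^ 2 by linarith, sqrt_sq h]

lemma ofAngle_neg_angle {z : Sph 1} (h : z.1 1 ≤ 0) : ofAngle (-angle z) = z := by
  have hz := sq_add_sq z
  refine ext' (by simp [ofAngle, angle, cos_arccos (by nlinarith : -1 ≤ z.1 0) (by nlinarith)]) ?_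
  simp only [snd_ofAngle, angle, sin_neg, sin_arccos]
  rw [show 1 - z.1 0 ^ 2 = (-z.1 1) ^ 2 by linarith, sqrt_sq (by linarith), neg_neg]

lemma angle_SphPt : angle (SphPt 1) = 0 := by
  simp [angle, SphPt]

lemma snd_SphPt : (SphPt 1).1 1 = 0 := by
  simp [SphPt]

lemma angle_eq_zero_or_pi_of_snd_eq_zero {z : Sph 1} (h : z.1 1 = 0) :
    angle z = 0 ∨ angle z = π := by
  have hz := sq_add_sq z
  rw [h] at hz
  rcases sq_eq_one_iff.1 (by linarith : z.1 0 ^ 2 = 1) with h' | h'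
  · exact Or.inl (by simp [angle, h'])
  · exact Or.inr (by simp [angle, h'])

end Sph

namespace WedgeSpheres

variable {ι : Type} {d : ι → ℕ} {Y Z : Type*}

def base : WedgeSpheres ι d := Quot.mk _ (.inl ())

def incl (i : ι) (z : Sph (d i)) : WedgeSpheres ι d := Quot.mk _ (.inr ⟨i, z⟩)

lemma incl_sphPt (i : ι) : (incl i (SphPt (d i)) : WedgeSpheres ι d) = base :=
  Quot.sound ⟨Or.inr ⟨i, rfl⟩, Or.inl rfl⟩

lemma continuous_incl (i : ι) : Continuous (incl (d := d) i) :=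
  continuous_quot_mk.comp (continuous_inr.comp continuous_sigmaMk)

@[elab_as_elim]
lemma induction_on {P : WedgeSpheres ι d → Prop} (w : WedgeSpheres ι d) (hbase : P base)
    (hincl : ∀ i z, P (incl i z)) : P w :=
  Quot.ind (fun a => by rcases a with ⟨⟩ | ⟨i, z⟩; exacts [hbase, hincl i z]) w

def desc (φ : ∀ i, Sph (d i) → Z) (z₀ : Z) (hφ : ∀ i, φ i (SphPt (d i)) = z₀) :
    WedgeSpheres ι d → Z :=
  Quot.lift (Sum.elim (fun _ => z₀) fun p => φ p.1 p.2) <| by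
    have key : ∀ a : Unit ⊕ (Σ i, Sph (d i)), (a = .inl () ∨ ∃ i, a = .inr ⟨i, SphPt (d i)⟩) →
        Sum.elim (fun _ => z₀) (fun p => φ p.1 p.2) a = z₀ := by
      rintro a (rfl | ⟨i, rfl⟩)
      exacts [rfl, hφ i]
    rintro a b ⟨ha, hb⟩
    rw [key a ha, key b hb]

variable {φ : ∀ i, Sph (d i) → Z} {z₀ : Z} {hφ : ∀ i, φ i (SphPt (d i)) = z₀}

@[simp] lemma desc_base : desc φ z₀ hφ base = z₀ := rfl

@[simp] lemma desc_incl (i : ι) (z : Sph (d i)) : desc φ z₀ hφ (incl i z) = φ i z := rfl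

lemma continuous_desc [TopologicalSpace Z] (h : ∀ i, Continuous (φ i)) :
    Continuous (desc φ z₀ hφ) :=
  continuous_quot_lift _ (continuous_const.sumElim (continuous_sigma h))

lemma continuous_desc_prod [TopologicalSpace Y] [LocallyCompactSpace Y] [TopologicalSpace Z]
    {φ : Y → ∀ i, Sph (d i) → Z} {z₀ : Y → Z} {hφ : ∀ y i, φ y i (SphPt (d i)) = z₀ y}
    (h : ∀ i, Continuous fun p : Y × Sph (d i) => φ p.1 i p.2) (hz₀ : Continuous z₀) :
    Continuous fun p : Y × WedgeSpheres ι d => desc (φ p.1) (z₀ p.1) (hφ p.1) p.2 := by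
  have hq : Topology.IsQuotientMap
      fun a : Unit ⊕ (Σ i, Sph (d i)) => (Quot.mk _ a : WedgeSpheres ι d) :=
    isQuotientMap_quot_mk
  refine hq.continuous_lift_prod_right ?_
  have hsum : Continuous fun p : Unit × Y ⊕ (Σ i, Sph (d i)) × Y =>
      Sum.elim (fun q => z₀ q.2) (fun q => φ q.2 q.1.1 q.1.2) p :=
    (hz₀.comp (continuous_snd (X := Unit))).sumElim <| by
      refine Continuous.comp (g := fun q : Σ i, Sph (d i) × Y => φ q.2.2 q.1 q.2.1)
        (continuous_sigma fun i => (h i).comp continuous_swap)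
        Homeomorph.sigmaProdDistrib.continuous
  refine (hsum.comp Homeomorph.sumProdDistrib.continuous).comp continuous_swap |>.congr ?_
  rintro ⟨y, ⟨⟩ | ⟨i, z⟩⟩ <;> rfl

end WedgeSpheres

namespace IndepKnK2

open Real Sph WedgeSpheres

variable {m : ℕ}

abbrev W (m : ℕ) := WedgeSpheres (Fin m) fun _ => 1

def edgeLoop (j : Fin (m + 1)) (s : ℝ) : W m :=
  Fin.lastCases (motive := fun _ => W m) base (fun i => incl i (ofAngle (2 * π * s))) j

@[simp] lemma edgeLoop_last (s : ℝ) : edgeLoop (Fin.last m) s = base := by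
  simp [edgeLoop]

@[simp] lemma edgeLoop_castSucc (i : Fin m) (s : ℝ) :
    edgeLoop i.castSucc s = incl i (ofAngle (2 * π * s)) := by
  simp [edgeLoop]

lemma edgeLoop_zero (j : Fin (m + 1)) : edgeLoop j 0 = base := by
  induction j using Fin.lastCases <;> simp [ofAngle_zero, incl_sphPt]

lemma edgeLoop_one (j : Fin (m + 1)) : edgeLoop j 1 = base := by
  induction j using Fin.lastCases <;> simp [ofAngle_two_pi, incl_sphPt]

lemma continuous_edgeLoop (j : Fin (m + 1)) : Continuous (edgeLoop j) := by
  induction j using Fin.lastCases with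
  | last => exact continuous_const.congr fun s => (edgeLoop_last s).symm
  | cast i =>
    exact ((continuous_incl i).comp (continuous_ofAngle.comp (continuous_const_mul _))).congr
      fun s => (edgeLoop_castSucc i s).symm

def toWedge : C(X (m + 1), W m) where
  toFun := glue (fun _ _ => base) (fun _ _ => base) (fun j (_ : Unit) s => edgeLoop j s) ()
  continuous_toFun :=
    (continuous_glue (FA := fun _ _ => base) (FB := fun _ _ => base)
      (FE := fun j (_ : Unit) s => edgeLoop j s) continuousOn_const continuousOn_const
      (fun j => (continuous_edgeLoop j).comp continuous_snd)
      (fun j _ _ _ _ => edgeLoop_zero j) (fun j _ _ _ _ => edgeLoop_one j)).comp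
      (Continuous.prodMk_right ())

lemma toWedge_apply (x : X (m + 1)) :
    toWedge x =
      glue (fun _ _ => base) (fun _ _ => base) (fun j (_ : Unit) s => edgeLoop j s) () x :=
  rfl

lemma toWedge_string (j : Fin (m + 1)) (τ : ℝ) :
    toWedge (string j τ) = edgeLoop j (clamp01 (3 * τ - 1)) := by
  rw [toWedge_apply]
  have hh := height_string j τ
  by_cases h0 : clamp01 (3 * τ - 1) = 0
  · rw [glue_of_height_eq_zero (hh.trans h0), h0, edgeLoop_zero]
  by_cases h1 : clamp01 (3 * τ - 1) = 1
  · rw [glue_of_height_eq_one (hh.trans h1), h1, edgeLoop_one]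
  have hτ0 : 1 / 3 ≤ τ := by
    by_contra h
    exact h0 (clamp01_of_nonpos (by linarith))
  have hτ1 : τ ≤ 2 / 3 := by
    by_contra h
    exact h1 (clamp01_of_one_le (by linarith))
  rw [glue_of_mem_edge_of_ne (string_mem_edge j hτ0 hτ1) (hh ▸ h0) (hh ▸ h1), hh]

/-- The `i`-th circle runs along the string of the edge `castSucc i` on its upper half and back
along the string of the last edge on its lower half. -/
def ofWedge : C(W m, X (m + 1)) where
  toFun := desc (fun i z => if 0 ≤ z.1 1 then string i.castSucc (angle z / π)
      else string (Fin.last m) (angle z / π)) baryBot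
    fun i => by simp [snd_SphPt, angle_SphPt, string_zero]
  continuous_toFun := by
    refine continuous_desc fun i => Continuous.if_le
      ((continuous_string _).comp (continuous_angle.div_const _))
      ((continuous_string _).comp (continuous_angle.div_const _))
      continuous_const continuous_snd_coord fun z hz => ?_
    rcases angle_eq_zero_or_pi_of_snd_eq_zero hz.symm with h | h <;>
      simp [h, pi_ne_zero, string_zero, string_one]

lemma ofWedge_incl (i : Fin m) (z : Sph 1) :
    ofWedge (incl i z) = if 0 ≤ z.1 1 then string i.castSucc (angle z / π)
      else string (Fin.last m) (angle z / π) :=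
  rfl

lemma toWedge_comp_ofWedge_incl (i : Fin m) (z : Sph 1) :
    toWedge (ofWedge (incl i z)) = if 0 ≤ z.1 1
      then incl i (ofAngle (2 * π * clamp01 (3 * (angle z / π) - 1))) else base := by
  rw [ofWedge_incl]
  split_ifs <;> simp [toWedge_string]

/-- At time `u` the upper half of the `i`-th circle is sent to the angle interpolating linearly
between the reparametrisation `2π · clamp01 (3θ/π - 1)` and `θ`, the lower half to `-uθ`. -/
def circleHomotopy (u : ℝ) (i : Fin m) (z : Sph 1) : W m :=
  incl i (if 0 ≤ z.1 1
    then ofAngle ((1 - u) * (2 * π * clamp01 (3 * (angle z / π) - 1)) + u * angle z)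
    else ofAngle (-(u * angle z)))

lemma circleHomotopy_sphPt (u : ℝ) (i : Fin m) : circleHomotopy u i (SphPt 1) = base := by
  simp [circleHomotopy, snd_SphPt, angle_SphPt, clamp01_of_nonpos, ofAngle_zero, incl_sphPt]

lemma continuous_circleHomotopy (i : Fin m) :
    Continuous fun p : I × Sph 1 => circleHomotopy p.1 i p.2 := by
  have hu : Continuous fun p : I × Sph 1 => (p.1 : ℝ) := continuous_subtype_val.comp continuous_fst
  have hA : Continuous fun p : I × Sph 1 => angle p.2 := continuous_angle.comp continuous_snd
  refine (continuous_incl i).comp (Continuous.if_le (continuous_ofAngle.comp ?_)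
    (continuous_ofAngle.comp (hu.mul hA).neg) continuous_const
    (continuous_snd_coord.comp continuous_snd) fun p hp => ?_)
  · exact ((continuous_const.sub hu).mul (continuous_const.mul (continuous_clamp01.comp
      ((continuous_const.mul (hA.div_const _)).sub continuous_const)))).add (hu.mul hA)
  · -- at `θ = π` the two formulas differ by a full turn
    rcases angle_eq_zero_or_pi_of_snd_eq_zero hp.symm with h | h
    · simp [h, clamp01_of_nonpos]
    · have e : 3 * (π / π) - 1 = 2 := by rw [div_self pi_ne_zero]; norm_num
      simp only [h, e, clamp01_of_one_le (by norm_num : (1 : ℝ) ≤ 2), ofAngle_neg]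
      congr 1
      ring

def wedgeHomotopy : (toWedge.comp ofWedge).Homotopy (ContinuousMap.id (W m)) where
  toFun p := desc (circleHomotopy p.1) base (circleHomotopy_sphPt p.1) p.2
  continuous_toFun := continuous_desc_prod (φ := fun u : I => circleHomotopy u)
    (hφ := fun u => circleHomotopy_sphPt u) continuous_circleHomotopy continuous_const
  map_zero_left w := by
    induction w using WedgeSpheres.induction_on with
    | hbase =>
      simp [ofWedge, toWedge_apply, glue_of_height_eq_zero height_baryBot]
    | hincl i z =>
      rw [ContinuousMap.comp_apply, toWedge_comp_ofWedge_incl]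
      simp only [desc_incl, circleHomotopy, Set.Icc.coe_zero]
      split_ifs <;> simp [ofAngle_zero, incl_sphPt]
  map_one_left w := by
    induction w using WedgeSpheres.induction_on with
    | hbase => rfl
    | hincl i z =>
      simp only [desc_incl, circleHomotopy, Set.Icc.coe_one, sub_self,
        zero_mul, one_mul, zero_add, ContinuousMap.id_apply]
      split_ifs with h
      · rw [ofAngle_angle h]
      · rw [ofAngle_neg_angle (le_of_not_ge h)]

/-- At time `u` the edge `castSucc i` runs along its own string and then back along the last
string down to parameter `1 - u`; at `u = 1` this is the loop `ofWedge ∘ edgeLoop`. -/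
def unwind (j : Fin (m + 1)) (u : I) (s : ℝ) : X (m + 1) :=
  Fin.lastCases (motive := fun _ => X (m + 1)) (string (Fin.last m) ((1 - u) * s))
    (fun i => if s ≤ 1 - u / 2 then string i.castSucc (2 * s / (2 - u))
      else string (Fin.last m) (3 - u - 2 * s)) j

@[simp] lemma unwind_last (u : I) (s : ℝ) :
    unwind (Fin.last m) u s = string (Fin.last m) ((1 - u) * s) := by
  simp [unwind]

@[simp] lemma unwind_castSucc (i : Fin m) (u : I) (s : ℝ) :
    unwind i.castSucc u s = if s ≤ 1 - u / 2 then string i.castSucc (2 * s / (2 - u))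
      else string (Fin.last m) (3 - u - 2 * s) := by
  simp [unwind]

lemma continuous_unwind (j : Fin (m + 1)) : Continuous fun p : I × ℝ => unwind j p.1 p.2 := by
  have hu : Continuous fun p : I × ℝ => (p.1 : ℝ) := continuous_subtype_val.comp continuous_fst
  induction j using Fin.lastCases with
  | last =>
    simp only [unwind_last]
    exact (continuous_string _).comp ((continuous_const.sub hu).mul continuous_snd)
  | cast i =>
    simp only [unwind_castSucc]
    refine Continuous.if_le ((continuous_string _).comp ?_)
      ((continuous_string _).comp ((continuous_const.sub hu).sub
        (continuous_const.mul continuous_snd))) continuous_snd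
      (continuous_const.sub (hu.div_const _)) fun p hp => ?_
    · exact (continuous_const.mul continuous_snd).div (continuous_const.sub hu)
        fun p => by linarith [p.1.2.2]
    · have hu2 : (2 : ℝ) - p.1 ≠ 0 := by linarith [p.1.2.2]
      rw [hp, show 2 * (1 - (p.1 : ℝ) / 2) / (2 - p.1) = 1 by field_simp,
        show 3 - (p.1 : ℝ) - 2 * (1 - p.1 / 2) = 1 by ring, string_one, string_one]

lemma unwind_zero (j : Fin (m + 1)) (u : I) : unwind j u 0 = baryBot := by
  induction j using Fin.lastCases with
  | last => simp [string_zero]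
  | cast i =>
    have h : (0 : ℝ) ≤ 1 - u / 2 := by linarith [u.2.2]
    rw [unwind_castSucc, if_pos h]
    simp [string_zero]

lemma unwind_one (j : Fin (m + 1)) (u : I) : unwind j u 1 = string (Fin.last m) (1 - u) := by
  induction j using Fin.lastCases with
  | last => simp
  | cast i =>
    rw [unwind_castSucc]
    split_ifs with h
    · have hu : (u : ℝ) = 0 := by linarith [u.2.1]
      rw [hu]
      norm_num [string_one]
    · congr 1
      ring

lemma unwind_one_left_eq_ofWedge_edgeLoop (j : Fin (m + 1)) {s : ℝ} (hs0 : 0 < s) (hs1 : s < 1) :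
    unwind j 1 s = ofWedge (edgeLoop j s) := by
  induction j using Fin.lastCases with
  | last => simp [string_zero]; rfl
  | cast i =>
    have := pi_pos
    rw [unwind_castSucc, edgeLoop_castSucc, ofWedge_incl, snd_ofAngle, Set.Icc.coe_one]
    by_cases hs : s ≤ 1 / 2
    · rw [if_pos (by linarith), if_pos (sin_nonneg_of_nonneg_of_le_pi (by positivity)
        (by nlinarith)), angle_ofAngle (by positivity) (by nlinarith)]
      congr 1
      field_simp
      ring
    · have hsin : sin (2 * π * s) < 0 := by
        rw [← sin_sub_two_pi]
        exact sin_neg_of_neg_of_neg_pi_lt (by nlinarith) (by nlinarith)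
      rw [if_neg (by linarith), if_neg hsin.not_ge,
        angle_ofAngle_of_pi_le (by nlinarith) (by nlinarith)]
      congr 1
      field_simp
      ring

def unwindHomotopy : (stretch (n := m + 1)).Homotopy (ofWedge.comp toWedge) where
  toFun p := glue (fun (_ : I) _ => baryBot) (fun (u : I) _ => string (Fin.last m) (1 - u))
    unwind p.1 p.2
  continuous_toFun := continuous_glue continuousOn_const
    ((continuous_string _).comp (continuous_const.sub
      (continuous_subtype_val.comp continuous_fst))).continuousOn
    continuous_unwind (fun j u _ _ _ => unwind_zero j u) (fun j u _ _ _ => unwind_one j u)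
  map_zero_left x := by
    dsimp only
    rw [stretch_apply]
    refine glue_congr (fun _ => rfl) (fun _ => by simp [string_one]) fun j _ _ hs1 => ?_
    induction j using Fin.lastCases with
    | last => simp
    | cast i => simp [hs1.le]
  map_one_left x := by
    dsimp only
    rw [ContinuousMap.comp_apply, toWedge_apply, apply_glue ofWedge]
    refine glue_congr (fun _ => rfl) (fun _ => by simp [string_zero]; rfl)
      fun j _ hs0 hs1 => unwind_one_left_eq_ofWedge_edgeLoop j hs0 hs1

def homotopyEquiv (m : ℕ) : ContinuousMap.HomotopyEquiv (X (m + 1)) (W m) where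
  toFun := toWedge
  invFun := ofWedge
  left_inv := ⟨unwindHomotopy.symm.trans stretchHomotopy.symm⟩
  right_inv := ⟨wedgeHomotopy⟩

end IndepKnK2

/-- `I(Kₙ × K₂)` is homotopy equivalent to a wedge of `n - 1` circles. -/
theorem stmt12 (n : ℕ) (hn : 2 ≤ n) :
    Nonempty (ContinuousMap.HomotopyEquiv (indepReal (tensorG (SimpleGraph.completeGraph (Fin n)) K2))
      (WedgeSpheres (Fin (n - 1)) (fun _ => 1))) := by
  obtain ⟨m, rfl⟩ : ∃ m, n = m + 1 := ⟨n - 1, by omega⟩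
  exact ⟨IndepKnK2.homotopyEquiv m⟩

end
end

section
/- For n = 3r or n = 3r - 1 (r ≥ 1), the independence complex of the path Pₙ is homotopy equivalent to the sphere S^{r-1}, and I(P_{3r+1}) is contractible. -/
noncomputable section

open scoped unitInterval

/-- The path graph on `n` vertices. -/
def pathG (n : ℕ) : SimpleGraph (Fin n) where
  Adj i j := i.val + 1 = j.val ∨ j.val + 1 = i.val
  symm := ⟨fun _ _ h => h.symm⟩
  loopless := ⟨fun _ h => by omega⟩


/-!
Two vertices `u ≠ v` with `N(u) ⊆ N(v)` allow one to delete `v` without changing the homotopy type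
(the fold lemma): moving the weight of `v` onto `u` along straight lines is a deformation
retraction. In `Pₙ`, the vertex `3k` folds away `3k + 2`, and deleting all vertices `≡ 2 (mod 3)`
leaves the disjoint edges `{3i, 3i + 1}`. For `n = 3r` or `n = 3r - 1` these are `r` edges, whose
independence complex is the boundary of the `r`-dimensional cross-polytope, i.e. the unit
sphere of `ℓ¹(Fin r)`. For `n = 3r + 1` the vertex `3r` is left isolated, so the complex is a cone.
-/

open Set Function Metric

theorem nonempty_homotopyEquiv_of_segment_retraction {E : Type*} [AddCommGroup E] [Module ℝ E]
    [TopologicalSpace E] [ContinuousAdd E] [ContinuousSub E] [ContinuousSMul ℝ E] {X A : Set E}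
    (hAX : A ⊆ X) {r : E → E} (hr : Continuous r) (hrX : MapsTo r X A) (hrA : EqOn r id A)
    (hseg : ∀ x ∈ X, segment ℝ x (r x) ⊆ X) :
    Nonempty (ContinuousMap.HomotopyEquiv X A) := by
  let ρ : C(X, A) := ⟨fun x => ⟨r x, hrX x.2⟩, (hr.comp continuous_subtype_val).subtype_mk _⟩
  let incl : C(A, X) := ⟨inclusion hAX, continuous_inclusion hAX⟩
  have hρ : ρ.comp incl = ContinuousMap.id A := ContinuousMap.ext fun a => Subtype.ext (hrA a.2)
  let H : ContinuousMap.Homotopy (ContinuousMap.id X) (incl.comp ρ) :=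
    { toFun := fun p => ⟨p.2 + (p.1 : ℝ) • (r p.2 - p.2),
        hseg _ p.2.2 <| (segment_eq_image' ℝ p.2.1 (r p.2)).symm ▸ ⟨p.1, p.1.2, rfl⟩⟩
      continuous_toFun := by fun_prop
      map_zero_left := fun x => by simp
      map_one_left := fun x => by ext1; simp [incl, ρ] }
  exact ⟨⟨ρ, incl, ⟨H.symm⟩, hρ ▸ ContinuousMap.Homotopic.refl _⟩⟩

namespace ContinuousLinearEquiv

variable {E F : Type*} [NormedAddCommGroup E] [NormedSpace ℝ E] [NormedAddCommGroup F]
  [NormedSpace ℝ F] (e : E ≃L[ℝ] F)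

def unitSphereMap : C(sphere (0 : E) 1, sphere (0 : F) 1) where
  toFun x := ⟨‖e x‖⁻¹ • e x, by
    simpa using norm_smul_inv_norm (𝕜 := ℝ) (e.map_ne_zero_iff.2 (ne_zero_of_mem_unit_sphere x))⟩
  continuous_toFun := by
    have he : Continuous fun x : sphere (0 : E) 1 => e x := e.continuous.comp continuous_subtype_val
    exact ((continuous_norm.comp he).inv₀ fun x => by simpa using ne_zero_of_mem_unit_sphere x).smul
      he |>.subtype_mk _

lemma symm_unitSphereMap_unitSphereMap (x : sphere (0 : E) 1) :
    e.symm.unitSphereMap (e.unitSphereMap x) = x := by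
  have hx : ‖(x : E)‖ = 1 := by simp
  have hc : 0 < ‖e x‖⁻¹ := by simpa using ne_zero_of_mem_unit_sphere x
  ext1
  simp only [unitSphereMap, ContinuousMap.coe_mk, map_smul, symm_apply_apply]
  rw [norm_smul, hx, mul_one, Real.norm_of_nonneg hc.le, inv_smul_smul₀ hc.ne']

def unitSphereHomeomorph : sphere (0 : E) 1 ≃ₜ sphere (0 : F) 1 where
  toFun := e.unitSphereMap
  invFun := e.symm.unitSphereMap
  left_inv := e.symm_unitSphereMap_unitSphereMap
  right_inv y := by simpa only [symm_symm] using e.symm.symm_unitSphereMap_unitSphereMap y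

end ContinuousLinearEquiv

namespace IndepComplex

variable {V : Type} {G : SimpleGraph V} {D D' : Set V}

lemma indep_of_support_subset_insert {f g : V → ℝ} {u : V}
    (hind : ∀ a b, f a ≠ 0 → f b ≠ 0 → ¬ G.Adj a b) (hu : ∀ w, f w ≠ 0 → ¬ G.Adj u w)
    (hg : ∀ w, g w ≠ 0 → w = u ∨ f w ≠ 0) :
    ∀ a b, g a ≠ 0 → g b ≠ 0 → ¬ G.Adj a b := by
  intro a b ha hb hab
  rcases hg a ha with rfl | ha' <;> rcases hg b hb with rfl | hb'
  · exact G.loopless.irrefl _ hab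
  · exact hu b hb' hab
  · exact hu a ha' hab.symm
  · exact hind a b ha' hb' hab

section Realization

variable [Fintype V]

/-- `I(G - D)`, realized in `ℝ^V` as the points of the realization of `I(G)` vanishing on `D`. -/
def indepRealDel (G : SimpleGraph V) (D : Set V) : Set (V → ℝ) :=
  {f | (∀ x, 0 ≤ f x) ∧ ∑ x, f x = 1 ∧ (∀ u v, f u ≠ 0 → f v ≠ 0 → ¬ G.Adj u v) ∧ ∀ d ∈ D, f d = 0}

lemma indepRealDel_anti (h : D ⊆ D') : indepRealDel G D' ⊆ indepRealDel G D :=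
  fun _ ⟨hnn, hsum, hind, hD⟩ => ⟨hnn, hsum, hind, fun d hd => hD d (h hd)⟩

def homeomorphIndepRealDelEmpty (G : SimpleGraph V) : indepReal G ≃ₜ indepRealDel G ∅ :=
  (Homeomorph.refl (V → ℝ)).subtype fun f => by
    simp [indepRealDel, finsum_eq_sum_of_fintype]

variable [DecidableEq V]

lemma add_single_sub_single_mem {u v : V} (hu : u ∉ D) (huv : ∀ w ∉ D, G.Adj u w → G.Adj v w)
    {f : V → ℝ} (hf : f ∈ indepRealDel G D) {c : ℝ} (hc₀ : 0 ≤ c) (hc : c ≤ f v) :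
    f + Pi.single u c - Pi.single v c ∈ indepRealDel G D := by
  rcases hc₀.eq_or_lt with rfl | hc₀
  · simpa using hf
  obtain ⟨hnn, hsum, hind, hD⟩ := hf
  have hfv : f v ≠ 0 := (hc₀.trans_le hc).ne'
  have happ (w : V) : (f + Pi.single u c - Pi.single v c : V → ℝ) w =
      f w + (if w = u then c else 0) - (if w = v then c else 0) := by
    simp [Pi.single_apply]
  refine ⟨fun w => ?_, ?_, ?_, fun d hd => ?_⟩
  · rw [happ]
    split_ifs with hwu hwv <;> subst_vars <;> linarith [hnn w]
  · simp [Finset.sum_add_distrib, Finset.sum_sub_distrib, hsum]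
  · refine indep_of_support_subset_insert hind
      (fun w hw hadj => hind v w hfv hw (huv w (fun hwD => hw (hD w hwD)) hadj)) fun w hw => ?_
    rw [happ] at hw
    by_cases hwu : w = u
    · exact .inl hwu
    · refine .inr fun hw0 => hw ?_
      have hwv : w ≠ v := fun h => hfv (h ▸ hw0)
      simp [hwu, hwv, hw0]
  · have hdu : d ≠ u := fun h => hu (h ▸ hd)
    have hdv : d ≠ v := fun h => hfv (h ▸ hD d hd)
    simp [happ, hdu, hdv, hD d hd]

lemma nonempty_homotopyEquiv_insert_of_adj_imp {u v : V} (hu : u ∉ D) (huv : u ≠ v)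
    (hadj : ∀ w ∉ D, G.Adj u w → G.Adj v w) :
    Nonempty (ContinuousMap.HomotopyEquiv (indepRealDel G D) (indepRealDel G (insert v D))) := by
  let r : (V → ℝ) → V → ℝ := fun f => f + Pi.single u (f v) - Pi.single v (f v)
  have hr : Continuous r := by
    have hv := continuous_apply (A := fun _ : V => ℝ) v
    exact (continuous_id.add ((continuous_single u).comp hv)).sub ((continuous_single v).comp hv)
  refine nonempty_homotopyEquiv_of_segment_retraction (indepRealDel_anti (subset_insert v D))
    hr (fun f hf => ?_) (fun f hf => ?_) (fun f hf => ?_)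
  · obtain ⟨hnn, hsum, hind, hD⟩ := add_single_sub_single_mem hu hadj hf (hf.1 v) le_rfl
    refine ⟨hnn, hsum, hind, ?_⟩
    rintro d (rfl | hd)
    · simp [r, huv.symm]
    · exact hD d hd
  · simp [r, hf.2.2.2 v (mem_insert v D)]
  · rw [segment_eq_image']
    rintro _ ⟨θ, ⟨hθ₀, hθ₁⟩, rfl⟩
    have hshift : f + θ • (r f - f) = f + Pi.single u (θ * f v) - Pi.single v (θ * f v) := by
      ext w
      simp only [r, Pi.add_apply, Pi.sub_apply, Pi.smul_apply, Pi.single_apply, smul_eq_mul]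
      split_ifs <;> ring
    show f + θ • (r f - f) ∈ _
    rw [hshift]
    exact add_single_sub_single_mem hu hadj hf (mul_nonneg hθ₀ (hf.1 v))
      (mul_le_of_le_one_left (hf.1 v) hθ₁)

lemma single_mem_indepRealDel {a : V} (ha : a ∉ D) : Pi.single a 1 ∈ indepRealDel G D := by
  refine ⟨fun w => ?_, by simp, ?_, fun d hd => ?_⟩
  · by_cases h : w = a <;> simp [h]
  · intro u w hu hw
    simp only [Pi.single_apply, ne_eq, ite_eq_right_iff, one_ne_zero, imp_false, not_not] at hu hw
    subst hu hw
    exact G.loopless.irrefl _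
  · have : d ≠ a := fun h => ha (h ▸ hd)
    simp [this]

lemma starConvex_indepRealDel {a : V} (ha : a ∉ D) (hiso : ∀ w ∉ D, ¬ G.Adj a w) :
    StarConvex ℝ (Pi.single a 1) (indepRealDel G D) := by
  rintro f ⟨hnn, hsum, hind, hD⟩ s t hs ht hst
  have happ (w : V) :
      (s • Pi.single a 1 + t • f : V → ℝ) w = (if w = a then s else 0) + t * f w := by
    simp [Pi.single_apply]
  refine ⟨fun w => ?_, ?_, ?_, fun d hd => ?_⟩
  · rw [happ]
    exact add_nonneg (by split_ifs <;> simp [hs]) (mul_nonneg ht (hnn w))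
  · simp [Finset.sum_add_distrib, ← Finset.mul_sum, hsum, hst]
  · refine indep_of_support_subset_insert hind
      (fun w hw => hiso w fun hwD => hw (hD w hwD)) fun w hw => ?_
    rw [happ] at hw
    by_cases hwa : w = a
    · exact .inl hwa
    · exact .inr fun hw0 => hw (by simp [hwa, hw0])
  · have : d ≠ a := fun h => ha (h ▸ hd)
    simp [happ, this, hD d hd]

lemma contractibleSpace_indepRealDel_of_forall_not_adj {a : V} (ha : a ∉ D)
    (hiso : ∀ w ∉ D, ¬ G.Adj a w) : ContractibleSpace (indepRealDel G D) :=
  (starConvex_indepRealDel ha hiso).contractibleSpace ⟨_, single_mem_indepRealDel ha⟩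

end Realization

variable {ι : Type}

/-- `G - D` is the disjoint union of the edges `e (i, true) — e (i, false)`. -/
structure IsMatchingLabelling (G : SimpleGraph V) (D : Set V) (e : ι × Bool → V) : Prop where
  injective : Injective e
  range_eq : range e = Dᶜ
  adj : ∀ i, G.Adj (e (i, true)) (e (i, false))
  fst_eq_of_adj : ∀ a b, G.Adj (e a) (e b) → a.1 = b.1

def toL1 (e : ι × Bool → V) (f : V → ℝ) : PiLp 1 (fun _ : ι => ℝ) :=
  WithLp.toLp 1 fun i => f (e (i, true)) - f (e (i, false))

def ofL1 (e : ι × Bool → V) (x : PiLp 1 (fun _ : ι => ℝ)) : V → ℝ :=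
  extend e (fun p => bif p.2 then (x p.1)⁺ else (x p.1)⁻) 0

lemma continuous_toL1 (e : ι × Bool → V) : Continuous (toL1 e) :=
  (PiLp.continuous_toLp 1 _).comp <| continuous_pi fun _ => by fun_prop

namespace IsMatchingLabelling

variable {e : ι × Bool → V}

lemma exists_eq_of_notMem (h : IsMatchingLabelling G D e) {v : V} (hv : v ∉ D) :
    ∃ p, e p = v := by
  rw [← mem_range, h.range_eq]
  exact hv

lemma ofL1_apply (h : IsMatchingLabelling G D e) (x : PiLp 1 (fun _ : ι => ℝ)) (p : ι × Bool) :
    ofL1 e x (e p) = bif p.2 then (x p.1)⁺ else (x p.1)⁻ :=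
  h.injective.extend_apply _ _ _

lemma ofL1_of_mem (h : IsMatchingLabelling G D e) (x : PiLp 1 (fun _ : ι => ℝ)) {d : V}
    (hd : d ∈ D) : ofL1 e x d = 0 :=
  extend_apply' _ _ _ fun ⟨p, hp⟩ => (h.range_eq ▸ mem_range_self p : e p ∈ Dᶜ) (hp ▸ hd)

lemma continuous_ofL1 (h : IsMatchingLabelling G D e) : Continuous (ofL1 e) := by
  refine continuous_pi fun v => ?_
  by_cases hv : v ∈ D
  · simpa [h.ofL1_of_mem _ hv] using continuous_const
  obtain ⟨⟨i, _ | _⟩, rfl⟩ := h.exists_eq_of_notMem hv <;>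
    simp only [h.ofL1_apply, cond_true, cond_false] <;> fun_prop

lemma toL1_ofL1 (h : IsMatchingLabelling G D e) (x : PiLp 1 (fun _ : ι => ℝ)) :
    toL1 e (ofL1 e x) = x := by
  ext i
  simp [toL1, h.ofL1_apply, posPart_sub_negPart]

variable [Fintype V]

lemma eq_zero_or_eq_zero (h : IsMatchingLabelling G D e) {f : V → ℝ}
    (hf : f ∈ indepRealDel G D) (i : ι) : f (e (i, true)) = 0 ∨ f (e (i, false)) = 0 := by
  by_contra! hne
  exact hf.2.2.1 _ _ hne.1 hne.2 (h.adj i)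

lemma abs_sub_eq_add (h : IsMatchingLabelling G D e) {f : V → ℝ} (hf : f ∈ indepRealDel G D)
    (i : ι) : |f (e (i, true)) - f (e (i, false))| = f (e (i, true)) + f (e (i, false)) := by
  rcases h.eq_zero_or_eq_zero hf i with h0 | h0 <;> simp [h0, abs_of_nonneg (hf.1 _)]

lemma ofL1_toL1 (h : IsMatchingLabelling G D e) {f : V → ℝ} (hf : f ∈ indepRealDel G D) :
    ofL1 e (toL1 e f) = f := by
  funext v
  by_cases hv : v ∈ D
  · rw [h.ofL1_of_mem _ hv, hf.2.2.2 v hv]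
  obtain ⟨⟨i, s⟩, rfl⟩ := h.exists_eq_of_notMem hv
  rw [h.ofL1_apply]
  cases s <;> rcases h.eq_zero_or_eq_zero hf i with h0 | h0 <;> simp [toL1, h0, hf.1 _]

variable [Fintype ι]

lemma sum_eq (h : IsMatchingLabelling G D e) {f : V → ℝ} (hf : ∀ d ∈ D, f d = 0) :
    ∑ v, f v = ∑ i, (f (e (i, true)) + f (e (i, false))) := by
  rw [← Fintype.sum_of_injective e h.injective (f ∘ e) f (fun v hv => ?_) fun _ => rfl,
    Fintype.sum_prod_type]
  · simp
  · rw [h.range_eq, mem_compl_iff, not_not] at hv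
    exact hf v hv

lemma norm_toL1 (h : IsMatchingLabelling G D e) {f : V → ℝ} (hf : f ∈ indepRealDel G D) :
    ‖toL1 e f‖ = 1 := by
  simp [PiLp.norm_eq_of_L1, toL1, h.abs_sub_eq_add hf, ← h.sum_eq hf.2.2.2, hf.2.1]

lemma ofL1_mem (h : IsMatchingLabelling G D e) {x : PiLp 1 (fun _ : ι => ℝ)} (hx : ‖x‖ = 1) :
    ofL1 e x ∈ indepRealDel G D := by
  refine ⟨fun v => ?_, ?_, fun u w hu hw hadj => ?_, fun d hd => h.ofL1_of_mem x hd⟩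
  · by_cases hv : v ∈ D
    · simp [h.ofL1_of_mem x hv]
    · obtain ⟨⟨i, _ | _⟩, rfl⟩ := h.exists_eq_of_notMem hv <;>
        simp [h.ofL1_apply, posPart_nonneg, negPart_nonneg]
  · rw [h.sum_eq fun d hd => h.ofL1_of_mem x hd, ← hx, PiLp.norm_eq_of_L1]
    simp [h.ofL1_apply, posPart_add_negPart]
  · obtain ⟨⟨i, s⟩, rfl⟩ := h.exists_eq_of_notMem fun hd => hu (h.ofL1_of_mem x hd)
    obtain ⟨⟨j, t⟩, rfl⟩ := h.exists_eq_of_notMem fun hd => hw (h.ofL1_of_mem x hd)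
    obtain rfl : i = j := h.fst_eq_of_adj _ _ hadj
    rw [h.ofL1_apply] at hu hw
    cases s <;> cases t
    · exact G.loopless.irrefl _ hadj
    · simp only [cond_false, cond_true, ne_eq, negPart_eq_zero, posPart_eq_zero] at hu hw
      linarith
    · simp only [cond_false, cond_true, ne_eq, negPart_eq_zero, posPart_eq_zero] at hu hw
      linarith
    · exact G.loopless.irrefl _ hadj

def homeomorphSphere (h : IsMatchingLabelling G D e) :
    indepRealDel G D ≃ₜ sphere (0 : PiLp 1 (fun _ : ι => ℝ)) 1 :=
  { toFun f := ⟨toL1 e f, mem_sphere_zero_iff_norm.2 (h.norm_toL1 f.2)⟩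
    invFun x := ⟨ofL1 e x, h.ofL1_mem (mem_sphere_zero_iff_norm.1 x.2)⟩
    left_inv f := Subtype.ext (h.ofL1_toL1 f.2)
    right_inv x := Subtype.ext (h.toL1_ofL1 x)
    continuous_toFun := ((continuous_toL1 e).comp continuous_subtype_val).subtype_mk _
    continuous_invFun := (h.continuous_ofL1.comp continuous_subtype_val).subtype_mk _ }

end IsMatchingLabelling

variable {n s : ℕ}

lemma pathG_nonempty_homotopyEquiv_mod_three_lt (k : ℕ) (hk : 3 * k ≤ n) :
    Nonempty (ContinuousMap.HomotopyEquiv (indepRealDel (pathG n) ∅)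
      (indepRealDel (pathG n) {d | d.1 % 3 = 2 ∧ d.1 < 3 * k})) := by
  induction k with
  | zero =>
    rw [show {d : Fin n | d.1 % 3 = 2 ∧ d.1 < 3 * 0} = ∅ by simp]
    exact ⟨.refl _⟩
  | succ k ih =>
    obtain ⟨e₁⟩ := ih (by omega)
    have hins : {d : Fin n | d.1 % 3 = 2 ∧ d.1 < 3 * (k + 1)} =
        insert ⟨3 * k + 2, by omega⟩ {d | d.1 % 3 = 2 ∧ d.1 < 3 * k} := by
      ext d
      simp only [mem_ofPred_eq, mem_insert_iff, Fin.ext_iff]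
      omega
    obtain ⟨e₂⟩ := nonempty_homotopyEquiv_insert_of_adj_imp (G := pathG n)
      (D := {d | d.1 % 3 = 2 ∧ d.1 < 3 * k}) (u := ⟨3 * k, by omega⟩) (v := ⟨3 * k + 2, by omega⟩)
      (by simp) (by simp) fun w hw hadj => by
        simp [pathG] at hw hadj ⊢
        omega
    exact ⟨hins ▸ e₁.trans e₂⟩

lemma nonempty_homotopyEquiv_indepReal_pathG (n : ℕ) :
    Nonempty (ContinuousMap.HomotopyEquiv (indepReal (pathG n))
      (indepRealDel (pathG n) {d | d.1 % 3 = 2})) := by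
  have hset : {d : Fin n | d.1 % 3 = 2 ∧ d.1 < 3 * (n / 3)} = {d | d.1 % 3 = 2} := by
    ext d
    simp only [mem_ofPred_eq, and_iff_left_iff_imp]
    omega
  obtain ⟨e⟩ := pathG_nonempty_homotopyEquiv_mod_three_lt (n / 3) (Nat.mul_div_le n 3)
  exact ⟨(homeomorphIndepRealDelEmpty _).toHomotopyEquiv.trans (hset ▸ e)⟩

def pathLabel (h : 3 * s + 2 ≤ n) (p : Fin (s + 1) × Bool) : Fin n :=
  ⟨3 * p.1 + bif p.2 then 0 else 1, by
    have := p.1.2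
    cases p.2 <;> simp only [cond_true, cond_false] <;> omega⟩

lemma isMatchingLabelling_pathLabel (h : 3 * s + 2 ≤ n) (h' : n ≤ 3 * s + 3) :
    IsMatchingLabelling (pathG n) {d | d.1 % 3 = 2} (pathLabel h) where
  injective := by
    rintro ⟨i, _ | _⟩ ⟨j, _ | _⟩ hij <;> simp [pathLabel, Fin.ext_iff] at hij ⊢ <;> omega
  range_eq := by
    ext v
    constructor
    · rintro ⟨⟨i, _ | _⟩, rfl⟩ <;> simp [pathLabel]
    · intro hv
      simp only [mem_compl_iff, mem_ofPred_eq] at hv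
      refine ⟨(⟨v / 3, by omega⟩, decide (v.1 % 3 = 0)), Fin.ext ?_⟩
      by_cases h0 : v.1 % 3 = 0 <;> simp [pathLabel, h0] <;> omega
  adj i := by simp [pathG, pathLabel]
  fst_eq_of_adj := by
    rintro ⟨i, _ | _⟩ ⟨j, _ | _⟩ hadj <;> simp [pathG, pathLabel, Fin.ext_iff] at hadj ⊢ <;> omega

lemma pathG_nonempty_homotopyEquiv_sphere (h : 3 * s + 2 ≤ n) (h' : n ≤ 3 * s + 3) :
    Nonempty (ContinuousMap.HomotopyEquiv (indepReal (pathG n)) (Sph s)) := by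
  obtain ⟨e⟩ := nonempty_homotopyEquiv_indepReal_pathG n
  let l1l2 := (PiLp.continuousLinearEquiv 1 ℝ fun _ : Fin (s + 1) => ℝ).trans
    (PiLp.continuousLinearEquiv 2 ℝ fun _ : Fin (s + 1) => ℝ).symm
  exact ⟨e.trans ((isMatchingLabelling_pathLabel h h').homeomorphSphere.trans
    l1l2.unitSphereHomeomorph).toHomotopyEquiv⟩

lemma pathG_contractibleSpace (r : ℕ) : ContractibleSpace (indepReal (pathG (3 * r + 1))) := by
  obtain ⟨e⟩ := nonempty_homotopyEquiv_indepReal_pathG (3 * r + 1)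
  have := contractibleSpace_indepRealDel_of_forall_not_adj (G := pathG (3 * r + 1))
    (D := {d | d.1 % 3 = 2}) (a := ⟨3 * r, by omega⟩) (by simp) fun w hw hadj => by
      simp [pathG] at hw hadj
      omega
  exact e.contractibleSpace

end IndepComplex

open IndepComplex in
/-- `I(Pₙ) ≃ S^{r-1}` for `n = 3r` or `n = 3r - 1` (`r ≥ 1`), and `I(P_{3r+1})` is
contractible. -/
theorem stmt16 :
    (∀ r : ℕ, 1 ≤ r →
      Nonempty (ContinuousMap.HomotopyEquiv (indepReal (pathG (3*r))) (Sph (r-1))) ∧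
      Nonempty (ContinuousMap.HomotopyEquiv (indepReal (pathG (3*r-1))) (Sph (r-1)))) ∧
    (∀ r : ℕ, ContractibleSpace (indepReal (pathG (3*r+1)))) := by
  refine ⟨fun r hr => ?_, pathG_contractibleSpace⟩
  obtain ⟨s, rfl⟩ : ∃ s, r = s + 1 := ⟨r - 1, by omega⟩
  exact ⟨pathG_nonempty_homotopyEquiv_sphere (by omega) (by omega),
    pathG_nonempty_homotopyEquiv_sphere (by omega) (by omega)⟩
end
end
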